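/- arXiv:2102.07206 — 2 statements merged into one kernel-verified Lean document; each statement's English description precedes it below -/
import Mathlib

section
/- Let W be an r×d real matrix with orthonormal rows (W Wᵀ = I_r), let x be a standard Gaussian random vector on ℝ^d, and let f : ℝ^r → ℝ be measurable with f(Wx)·x integrable. Define h(W) := E[f(Wx) x] ∈ ℝ^d. Then h(W) lies in the row space of W; equivalently Wᵀ W h(W) = h(W). -/
open MeasureTheory ProbabilityTheory Matrix

/-- The standard Gaussian measure on `ℝ^d` (i.i.d. `N(0,1)` coordinates). -/
noncomputable def stdGaussian (d : ℕ) : Measure (Fin d → ℝ) :=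
  Measure.pi fun _ => gaussianReal 0 1

lemma lintegral_pi_prod {n : ℕ} (g : Fin n → ℝ → ENNReal) (hg : ∀ i, Measurable (g i)) :
    ∫⁻ x : Fin n → ℝ, ∏ i, g i (x i) ∂(Measure.pi fun _ => (volume : Measure ℝ))
      = ∏ i, ∫⁻ y, g i y := by
  induction n with
  | zero => simp [Measure.pi_of_empty]
  | succ n ih =>
    have h := (measurePreserving_piFinSuccAbove (fun _ : Fin (n+1) => (volume : Measure ℝ)) 0).symm
    have hmeas : Measurable fun x : Fin (n+1) → ℝ => ∏ i, g i (x i) :=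
      Finset.measurable_prod _ fun i _ => (hg i).comp (measurable_pi_apply i)
    rw [← h.lintegral_comp hmeas]
    simp only [MeasurableEquiv.piFinSuccAbove_symm_apply, Fin.insertNthEquiv,
      Equiv.coe_fn_mk, Fin.insertNth_zero]
    simp only [Fin.prod_univ_succ, Fin.cons_zero, Fin.cons_succ, Fin.zero_succAbove, cast_eq]
    rw [lintegral_prod_mul (f := g 0) (g := fun z : Fin n → ℝ => ∏ x : Fin n, g x.succ (z x))
      ((hg 0).aemeasurable)
      (Finset.measurable_prod _ fun i _ => ((hg i.succ).comp (measurable_pi_apply i))).aemeasurable]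
    rw [ih (fun i => g i.succ) fun i => hg i.succ]

lemma stdGaussian_eq_withDensity (d : ℕ) :
    stdGaussian d = (volume : Measure (Fin d → ℝ)).withDensity
      (fun x => ∏ i, gaussianPDF 0 1 (x i)) := by
  refine Measure.pi_eq fun s hs => ?_
  rw [withDensity_apply _ (MeasurableSet.univ_pi hs),
    ← lintegral_indicator (MeasurableSet.univ_pi hs) _]
  have hind : ∀ x : Fin d → ℝ,
      (Set.univ.pi s).indicator (fun x : Fin d → ℝ => ∏ i, gaussianPDF 0 1 (x i)) x
        = ∏ i, (s i).indicator (gaussianPDF 0 1) (x i) := by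
    intro x
    by_cases hx : x ∈ Set.univ.pi s
    · rw [Set.indicator_of_mem hx]
      exact Finset.prod_congr rfl fun i _ =>
        (Set.indicator_of_mem (hx i (Set.mem_univ i)) _).symm
    · rw [Set.indicator_of_notMem hx]
      rw [Set.mem_univ_pi] at hx
      push_neg at hx
      obtain ⟨i, hi⟩ := hx
      exact (Finset.prod_eq_zero (Finset.mem_univ i) (Set.indicator_of_notMem hi _)).symm
  simp_rw [hind]
  rw [show (volume : Measure (Fin d → ℝ)) = Measure.pi fun _ => (volume : Measure ℝ) from
    volume_pi]
  rw [lintegral_pi_prod _ fun i => (measurable_gaussianPDF 0 1).indicator (hs i)]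
  refine Finset.prod_congr rfl fun i _ => ?_
  rw [lintegral_indicator (hs i) _, gaussianReal_apply 0 one_ne_zero]

lemma prod_gaussianPDF_eq (d : ℕ) (x : Fin d → ℝ) :
    ∏ i, gaussianPDF 0 1 (x i)
      = ENNReal.ofReal ((Real.sqrt (2 * Real.pi))⁻¹ ^ d * Real.exp (-(∑ i, x i ^ 2) / 2)) := by
  have h1 : ∀ t : ℝ, gaussianPDF 0 1 t
      = ENNReal.ofReal ((Real.sqrt (2 * Real.pi))⁻¹ * Real.exp (-(t ^ 2) / 2)) := by
    intro t
    simp [gaussianPDF, gaussianPDFReal]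
  simp_rw [h1]
  rw [← ENNReal.ofReal_prod_of_nonneg (fun i _ => by positivity)]
  congr 1
  rw [Finset.prod_mul_distrib, Finset.prod_const, ← Real.exp_sum]
  simp [Finset.card_univ, neg_div, Finset.sum_div, Finset.sum_neg_distrib]

lemma measurePreserving_mulVec_volume {d : ℕ} (M : Matrix (Fin d) (Fin d) ℝ)
    (hdet : |M.det| = 1) :
    MeasurePreserving (fun x : Fin d → ℝ => M *ᵥ x) volume volume := by
  have hdet0 : M.det ≠ 0 := fun h => by simp [h] at hdet
  refine ⟨(Matrix.mulVecLin M).continuous_of_finiteDimensional.measurable, ?_⟩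
  have h := Real.map_matrix_volume_pi_eq_smul_volume_pi hdet0
  have hfun : (fun x : Fin d → ℝ => M *ᵥ x) = ⇑(Matrix.toLin' M) := by
    funext x; rw [Matrix.toLin'_apply]
  rw [hfun, h, abs_inv, hdet, inv_one, ENNReal.ofReal_one, one_smul]

lemma map_stdGaussian {d : ℕ} (M : Matrix (Fin d) (Fin d) ℝ) (hdet : |M.det| = 1)
    (hnorm : ∀ x : Fin d → ℝ, ∑ i, (M *ᵥ x) i ^ 2 = ∑ i, x i ^ 2) :
    (stdGaussian d).map (fun x => M *ᵥ x) = stdGaussian d := by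
  have hmp := measurePreserving_mulVec_volume M hdet
  have hρmeas : Measurable fun x : Fin d → ℝ => ∏ i, gaussianPDF 0 1 (x i) :=
    Finset.measurable_prod _ fun i _ => (measurable_gaussianPDF 0 1).comp (measurable_pi_apply i)
  have hρinv : ∀ x, (∏ i, gaussianPDF 0 1 ((M *ᵥ x) i)) = ∏ i, gaussianPDF 0 1 (x i) := by
    intro x; rw [prod_gaussianPDF_eq, prod_gaussianPDF_eq, hnorm]
  ext s hs
  rw [Measure.map_apply hmp.measurable hs]
  rw [stdGaussian_eq_withDensity, withDensity_apply _ (hmp.measurable hs),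
    withDensity_apply _ hs, ← lintegral_indicator (hmp.measurable hs) _,
    ← lintegral_indicator hs _]
  have hpt : ∀ x : Fin d → ℝ,
      ((fun x : Fin d → ℝ => M *ᵥ x) ⁻¹' s).indicator
        (fun x : Fin d → ℝ => ∏ i, gaussianPDF 0 1 (x i)) x
      = s.indicator (fun x : Fin d → ℝ => ∏ i, gaussianPDF 0 1 (x i)) (M *ᵥ x) := by
    intro x
    by_cases hx : M *ᵥ x ∈ s
    · rw [Set.indicator_of_mem hx, Set.indicator_of_mem (Set.mem_preimage.mpr hx), hρinv]
    · have hx' : x ∉ (fun x : Fin d → ℝ => M *ᵥ x) ⁻¹' s := hx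
      rw [Set.indicator_of_notMem hx', Set.indicator_of_notMem hx]
  simp_rw [hpt]
  exact hmp.lintegral_comp (hρmeas.indicator hs)


/-- If `W` has orthonormal rows (`W Wᵀ = I`), `x` is standard Gaussian
on `ℝ^d`, `f` is measurable with `f(Wx)·x` integrable, then the cross-correlation vector
`h(W) := E[f(Wx) x]` lies in the row space of `W` (the range of `Wᵀ`); equivalently
`Wᵀ W h(W) = h(W)`. -/
theorem stmt1 {d r : ℕ} (W : Matrix (Fin r) (Fin d) ℝ)
    (hW : W * Wᵀ = 1)
    (f : (Fin r → ℝ) → ℝ) (hf : Measurable f)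
    (hint : Integrable (fun x => f (W *ᵥ x) • x) (stdGaussian d)) :
    (∫ x, f (W *ᵥ x) • x ∂(stdGaussian d)) ∈ LinearMap.range (Wᵀ.mulVecLin) ∧
    (Wᵀ * W) *ᵥ (∫ x, f (W *ᵥ x) • x ∂(stdGaussian d))
      = ∫ x, f (W *ᵥ x) • x ∂(stdGaussian d) := by
  set P : Matrix (Fin d) (Fin d) ℝ := Wᵀ * W with hPdef
  set S : Matrix (Fin d) (Fin d) ℝ := P + P - 1 with hSdef
  have hPP : P * P = P := by
    rw [hPdef, Matrix.mul_assoc, ← Matrix.mul_assoc W, hW, Matrix.one_mul]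
  have hPT : Pᵀ = P := by rw [hPdef, Matrix.transpose_mul, Matrix.transpose_transpose]
  have hPS : P * S = P := by
    rw [hSdef, Matrix.mul_sub, Matrix.mul_add, hPP, Matrix.mul_one, add_sub_cancel_right]
  have hSS : S * S = 1 := by
    calc S * S = P * S + P * S - 1 * S := by rw [hSdef, Matrix.sub_mul, Matrix.add_mul]
    _ = P + P - (P + P - 1) := by rw [hPS, Matrix.one_mul, hSdef]
    _ = 1 := by abel
  have hST : Sᵀ = S := by
    rw [hSdef, Matrix.transpose_sub, Matrix.transpose_add, hPT, Matrix.transpose_one]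
  have hWS : W * S = W := by
    rw [hSdef, Matrix.mul_sub, Matrix.mul_add, Matrix.mul_one, hPdef, ← Matrix.mul_assoc,
      hW, Matrix.one_mul, add_sub_cancel_right]
  have hdet : |S.det| = 1 := by
    have h1 : S.det * S.det = 1 := by rw [← Matrix.det_mul, hSS, Matrix.det_one]
    rcases mul_self_eq_one_iff.mp h1 with h | h <;> simp [h]
  have hnorm : ∀ x : Fin d → ℝ, ∑ i, (S *ᵥ x) i ^ 2 = ∑ i, x i ^ 2 := by
    intro x
    have e1 : ∀ v : Fin d → ℝ, ∑ i, v i ^ 2 = v ⬝ᵥ v := by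
      intro v; simp [dotProduct, sq]
    rw [e1, e1]
    calc (S *ᵥ x) ⬝ᵥ (S *ᵥ x) = ((S *ᵥ x) ᵥ* S) ⬝ᵥ x := dotProduct_mulVec _ _ _
    _ = x ⬝ᵥ x := by
        rw [show (S *ᵥ x) ᵥ* S = S *ᵥ (S *ᵥ x) by rw [← Matrix.mulVec_transpose, hST],
          Matrix.mulVec_mulVec, hSS, Matrix.one_mulVec]
  have hmap := map_stdGaussian S hdet hnorm
  have hSmeas : Measurable fun x : Fin d → ℝ => S *ᵥ x :=
    (Matrix.mulVecLin S).continuous_of_finiteDimensional.measurable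
  set h : Fin d → ℝ := ∫ x, f (W *ᵥ x) • x ∂(stdGaussian d) with hhdef
  have key : h = S *ᵥ h := by
    rw [hhdef]
    conv_lhs => rw [← hmap]
    rw [integral_map hSmeas.aemeasurable (by rw [hmap]; exact hint.1)]
    have hpt : ∀ x : Fin d → ℝ, f (W *ᵥ (S *ᵥ x)) • (S *ᵥ x)
        = (Matrix.mulVecLin S).toContinuousLinearMap (f (W *ᵥ x) • x) := by
      intro x
      rw [Matrix.mulVec_mulVec, hWS]
      simp [Matrix.mulVecLin_apply, Matrix.mulVec_smul]
    simp_rw [hpt]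
    rw [ContinuousLinearMap.integral_comp_comm _ hint]
    simp [Matrix.mulVecLin_apply]
  have hPh : P *ᵥ h = h := by
    have hexp : S *ᵥ h = P *ᵥ h + P *ᵥ h - h := by
      rw [hSdef, Matrix.sub_mulVec, Matrix.add_mulVec, Matrix.one_mulVec]
    have h2 : P *ᵥ h + P *ᵥ h = h + h := by
      have := key.symm
      rw [hexp] at this
      exact sub_eq_iff_eq_add.mp this
    have h3 : (2 : ℝ) • (P *ᵥ h) = (2 : ℝ) • h := by
      rw [two_smul, two_smul]; exact h2
    exact smul_right_injective _ (two_ne_zero) h3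
  refine ⟨⟨W *ᵥ h, ?_⟩, hPh⟩
  rw [Matrix.mulVecLin_apply, Matrix.mulVec_mulVec]
  exact hPh
end

section
/- (Few-shot excess risk with a learned representation; population version.) Let W ∈ ℝ^{r×d} have orthonormal rows, let (x,y) be a random pair with x standard Gaussian on ℝ^d, let ℱ be a set of functions ℝ^r → ℝ satisfying: for every f ∈ ℱ, every r×r orthogonal matrix Q and every P ∈ ℝ^{r×d} there exists g ∈ ℱ with f(Px) = g(QPx) for all x. Let ℓ be a loss such that for every f ∈ ℱ and every label value y, the map p ↦ ℓ(f(p), y) is L-Lipschitz, define 𝓛(f;P) := E[ℓ(f(Px), y)], and assume f* ∈ ℱ satisfies min_P 𝓛(f*;P) = 𝓛(f*;W). Let Û_r ∈ ℝ^{d×r} have orthonormal columns, let Q̂ minimize ‖Û_r Q − Wᵀ‖ over r×r orthogonal matrices and set Ŵ := (Û_r Q̂)ᵀ, and let f̂ ∈ ℱ minimize 𝓛(f; Û_rᵀ) over ℱ. Then there is an absolute constant C such that 𝓛(f̂; Û_rᵀ) − 𝓛(f*; W) ≤ C · L √r ‖Ŵ − W‖. -/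
open MeasureTheory ProbabilityTheory Matrix Real

/-- The `ℓ₂ → ℓ₂` operator norm of a real matrix. -/
noncomputable def opNorm {m n : ℕ} (A : Matrix (Fin m) (Fin n) ℝ) : ℝ :=
  ‖LinearMap.toContinuousLinearMap (Matrix.toEuclideanLin A)‖

/-- The Euclidean (`ℓ₂`) norm of a vector in `ℝ^n`. -/
noncomputable def euclNorm {n : ℕ} (v : Fin n → ℝ) : ℝ :=
  Real.sqrt (∑ i, v i ^ 2)

lemma euclNorm_nonneg {n : ℕ} (v : Fin n → ℝ) : 0 ≤ euclNorm v := Real.sqrt_nonneg _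

lemma euclNorm_eq_norm {n : ℕ} (v : Fin n → ℝ) :
    euclNorm v = ‖(WithLp.equiv 2 (Fin n → ℝ)).symm v‖ := by
  rw [EuclideanSpace.norm_eq, euclNorm]
  congr 1; apply Finset.sum_congr rfl; intro i _
  rw [Real.norm_eq_abs, sq_abs]; rfl

lemma sq_euclNorm {n : ℕ} (v : Fin n → ℝ) : euclNorm v ^ 2 = ∑ i, v i ^ 2 :=
  Real.sq_sqrt (Finset.sum_nonneg fun i _ => sq_nonneg _)

lemma abs_le_euclNorm {n : ℕ} (v : Fin n → ℝ) (i : Fin n) : |v i| ≤ euclNorm v := by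
  rw [euclNorm, ← Real.sqrt_sq_eq_abs]
  exact Real.sqrt_le_sqrt (Finset.single_le_sum (fun j _ => sq_nonneg (v j)) (Finset.mem_univ i))

lemma euclNorm_smul {n : ℕ} (c : ℝ) (v : Fin n → ℝ) : euclNorm (c • v) = |c| * euclNorm v := by
  simp only [euclNorm, Pi.smul_apply, smul_eq_mul, mul_pow, ← Finset.mul_sum]
  rw [Real.sqrt_mul (sq_nonneg c), Real.sqrt_sq_eq_abs]

lemma opNorm_nonneg {m n : ℕ} (A : Matrix (Fin m) (Fin n) ℝ) : 0 ≤ opNorm A := norm_nonneg _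

lemma euclNorm_mulVec_le {m n : ℕ} (A : Matrix (Fin m) (Fin n) ℝ) (v : Fin n → ℝ) :
    euclNorm (A *ᵥ v) ≤ opNorm A * euclNorm v := by
  rw [euclNorm_eq_norm, euclNorm_eq_norm]
  have := (LinearMap.toContinuousLinearMap (Matrix.toEuclideanLin A)).le_opNorm
    ((WithLp.equiv 2 (Fin n → ℝ)).symm v)
  simpa [opNorm] using this

lemma row_euclNorm_le {m n : ℕ} (A : Matrix (Fin m) (Fin n) ℝ) (i : Fin m) :
    euclNorm (fun j => A i j) ≤ opNorm A := by
  set s := euclNorm (fun j => A i j) with hs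
  rcases eq_or_lt_of_le (euclNorm_nonneg (fun j => A i j)) with h | h
  · rw [hs, ← h]; exact opNorm_nonneg A
  · set u : Fin n → ℝ := s⁻¹ • (fun j => A i j) with hu
    have hMu : (A *ᵥ u) i = s := by
      have hsum : ∑ j, A i j ^ 2 = s ^ 2 := (sq_euclNorm _).symm
      simp only [hu, Matrix.mulVec, dotProduct, Pi.smul_apply, smul_eq_mul]
      have : ∑ j, A i j * (s⁻¹ * A i j) = s⁻¹ * ∑ j, A i j ^ 2 := by
        rw [Finset.mul_sum]; apply Finset.sum_congr rfl; intro j _; ring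
      rw [this, hsum, sq]
      field_simp
    have hnu : euclNorm u = 1 := by
      rw [hu, euclNorm_smul, abs_of_pos (inv_pos.mpr h), ← hs, inv_mul_cancel₀ (ne_of_gt h)]
    calc s = |(A *ᵥ u) i| := by rw [hMu, abs_of_pos h]
      _ ≤ euclNorm (A *ᵥ u) := abs_le_euclNorm _ i
      _ ≤ opNorm A * euclNorm u := euclNorm_mulVec_le A u
      _ = opNorm A := by rw [hnu, mul_one]


lemma gaussian_pdf_eq (x : ℝ) :
    gaussianPDFReal 0 1 x = (Real.sqrt (2 * π))⁻¹ * Real.exp (-(2⁻¹) * x ^ 2) := by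
  simp only [gaussianPDFReal, NNReal.coe_one, mul_one, sub_zero]
  ring_nf

lemma gaussian_withDensity :
    gaussianReal 0 1 = MeasureTheory.volume.withDensity
      (fun x => ((gaussianPDFReal 0 1 x).toNNReal : ENNReal)) := by
  rw [gaussianReal_of_var_ne_zero 0 one_ne_zero]
  rfl

lemma integral_gaussianReal_eq (f : ℝ → ℝ) :
    ∫ x, f x ∂(gaussianReal 0 1) = ∫ x, gaussianPDFReal 0 1 x * f x := by
  rw [gaussian_withDensity,
    integral_withDensity_eq_integral_smul (measurable_gaussianPDFReal 0 1).real_toNNReal]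
  congr 1; funext x
  simp only [NNReal.smul_def, Real.coe_toNNReal _ (gaussianPDFReal_nonneg 0 1 x), smul_eq_mul]

lemma integrable_gaussianReal_iff (f : ℝ → ℝ) :
    Integrable f (gaussianReal 0 1) ↔
      Integrable (fun x => gaussianPDFReal 0 1 x * f x) MeasureTheory.volume := by
  rw [gaussian_withDensity,
    integrable_withDensity_iff_integrable_smul (measurable_gaussianPDFReal 0 1).real_toNNReal]
  constructor <;> intro h <;> refine h.congr (Filter.Eventually.of_forall fun x => ?_) <;>
    simp only [NNReal.smul_def, Real.coe_toNNReal _ (gaussianPDFReal_nonneg 0 1 x), smul_eq_mul]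

lemma integrable_id_gaussian : Integrable (fun x : ℝ => x) (gaussianReal 0 1) := by
  rw [integrable_gaussianReal_iff]
  have h := (integrable_mul_exp_neg_mul_sq (b := 2⁻¹) (by norm_num)).const_mul
    ((Real.sqrt (2 * π))⁻¹)
  refine h.congr (Filter.Eventually.of_forall fun x => ?_)
  simp only [gaussian_pdf_eq]; ring

lemma integrable_sq_gaussian : Integrable (fun x : ℝ => x ^ 2) (gaussianReal 0 1) := by
  rw [integrable_gaussianReal_iff]
  have h := (integrable_rpow_mul_exp_neg_mul_sq (b := 2⁻¹) (by norm_num)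
    (s := ((2 : ℕ) : ℝ)) (by norm_num)).const_mul ((Real.sqrt (2 * π))⁻¹)
  refine h.congr (Filter.Eventually.of_forall fun x => ?_)
  simp only [Real.rpow_natCast, gaussian_pdf_eq]
  ring

lemma integral_id_gaussian : ∫ x, x ∂(gaussianReal 0 1) = 0 := by
  rw [integral_gaussianReal_eq]
  have h1 : ∫ x : ℝ, gaussianPDFReal 0 1 x * x =
      (Real.sqrt (2 * π))⁻¹ * ∫ x : ℝ, x * Real.exp (-(2⁻¹) * x ^ 2) := by
    rw [← integral_const_mul]
    congr 1; funext x; rw [gaussian_pdf_eq]; ring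
  rw [h1]
  have hodd : ∫ x : ℝ, x * Real.exp (-(2⁻¹) * x ^ 2) = 0 := by
    set f : ℝ → ℝ := fun x => x * Real.exp (-(2⁻¹) * x ^ 2) with hf
    have A : MeasurableEmbedding fun x : ℝ => -x :=
      (Homeomorph.neg ℝ).isClosedEmbedding.measurableEmbedding
    have h2 : ∫ x, f x = ∫ x, f (-x) := by
      conv_lhs => rw [← Measure.map_neg_eq_self (MeasureTheory.volume : Measure ℝ)]
      exact A.integral_map f
    have h3 : ∀ x, f (-x) = -f x := by
      intro x
      show (-x) * Real.exp (-(2⁻¹) * (-x) ^ 2) = -(x * Real.exp (-(2⁻¹) * x ^ 2))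
      rw [neg_sq]; ring
    have h4 : ∫ x, f (-x) = -∫ x, f x := by
      simp only [h3]; exact integral_neg f
    have h5 := h2.trans h4
    linarith [h5]
  rw [hodd, mul_zero]

lemma integral_sq_gaussian : ∫ x, x ^ 2 ∂(gaussianReal 0 1) = 1 := by
  rw [integral_gaussianReal_eq]
  have h1 : ∫ x : ℝ, gaussianPDFReal 0 1 x * x ^ 2 =
      (Real.sqrt (2 * π))⁻¹ * ∫ x : ℝ, x ^ 2 * Real.exp (-(2⁻¹) * x ^ 2) := by
    rw [← integral_const_mul]
    congr 1; funext x; rw [gaussian_pdf_eq]; ring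
  rw [h1]
  have habs : ∫ x : ℝ, x ^ 2 * Real.exp (-(2⁻¹) * x ^ 2) =
      2 * ∫ x in Set.Ioi (0:ℝ), x ^ 2 * Real.exp (-(2⁻¹) * x ^ 2) := by
    rw [← integral_comp_abs (f := fun x => x ^ 2 * Real.exp (-(2⁻¹) * x ^ 2))]
    congr 1; funext x; rw [sq_abs]
  have hIoi : ∫ x in Set.Ioi (0:ℝ), x ^ 2 * Real.exp (-(2⁻¹) * x ^ 2) =
      ((1:ℝ)/2) ^ (-((2:ℝ) + 1) / 2) * (1 / 2) * Real.Gamma ((2 + 1) / 2) := by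
    rw [← integral_rpow_mul_exp_neg_mul_rpow (p := 2) (q := 2) (b := 1/2) (by norm_num)
      (by norm_num) (by norm_num)]
    refine setIntegral_congr_fun measurableSet_Ioi (fun x _ => ?_)
    have h2 : x ^ (2:ℝ) = x ^ (2:ℕ) := by
      rw [show ((2:ℝ)) = ((2:ℕ):ℝ) by norm_num, Real.rpow_natCast]
    rw [h2]; norm_num
  have hG : Real.Gamma ((2 + 1) / 2) = Real.sqrt π / 2 := by
    have h : ((2:ℝ) + 1) / 2 = 1/2 + 1 := by norm_num
    rw [h, Real.Gamma_add_one (by norm_num), Real.Gamma_one_half_eq]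
    ring
  have h8 : ((1:ℝ)/2) ^ (-((2:ℝ) + 1) / 2) = Real.sqrt 8 := by
    have h1 : ((1:ℝ)/2) = (2:ℝ)⁻¹ := by norm_num
    rw [h1, Real.inv_rpow (by norm_num : (0:ℝ) ≤ 2), ← Real.rpow_neg (by norm_num : (0:ℝ) ≤ 2)]
    have h2 : -(-((2:ℝ) + 1) / 2) = (3 : ℕ) * (1/2 : ℝ) := by norm_num
    rw [h2, Real.rpow_mul (by norm_num : (0:ℝ) ≤ 2), Real.rpow_natCast, ← Real.sqrt_eq_rpow]
    norm_num
  rw [habs, hIoi, hG, h8]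
  have hs : Real.sqrt 8 * Real.sqrt π = 2 * Real.sqrt (2 * π) := by
    rw [← Real.sqrt_mul (by norm_num : (0:ℝ) ≤ 8), show (8:ℝ) * π = 4 * (2 * π) by ring,
      Real.sqrt_mul (by norm_num : (0:ℝ) ≤ 4),
      show Real.sqrt 4 = 2 by rw [show (4:ℝ) = 2^2 by norm_num, Real.sqrt_sq (by norm_num)]]
  have hne : Real.sqrt (2 * π) ≠ 0 := by
    positivity
  have hs2 : Real.sqrt 2 * Real.sqrt π = Real.sqrt (2 * π) :=
    (Real.sqrt_mul (by norm_num) π).symm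
  field_simp
  nlinarith [hs, hs2]


lemma pi_integral_prod {ι : Type*} [Fintype ι] (μ : Measure ℝ) [SigmaFinite μ]
    (f : ι → ℝ → ℝ) :
    ∫ x : ι → ℝ, ∏ i, f i (x i) ∂(Measure.pi fun _ => μ) = ∏ i, ∫ x, f i x ∂μ := by
  letI : MeasureSpace ℝ := ⟨μ⟩
  exact MeasureTheory.integral_fintype_prod_eq_prod (μ := fun _ => μ) f

lemma pi_integrable_prod {ι : Type*} [Fintype ι] (μ : Measure ℝ) [SigmaFinite μ]
    (f : ι → ℝ → ℝ) (hf : ∀ i, Integrable (f i) μ) :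
    Integrable (fun x : ι → ℝ => ∏ i, f i (x i)) (Measure.pi fun _ => μ) := by
  letI : MeasureSpace ℝ := ⟨μ⟩
  exact MeasureTheory.Integrable.fintype_prod (f := fun i => f i) hf

noncomputable def fac {d : ℕ} (j k i : Fin d) : ℝ → ℝ :=
  fun t => (if i = j then t else 1) * (if i = k then t else 1)

lemma fac_integrable {d : ℕ} (j k i : Fin d) : Integrable (fac j k i) (gaussianReal 0 1) := by
  unfold fac
  by_cases h1 : i = j <;> by_cases h2 : i = k
  · simp only [if_pos h1, if_pos h2]
    simpa [pow_two] using integrable_sq_gaussian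
  · simp only [if_pos h1, if_neg h2, mul_one]
    exact integrable_id_gaussian
  · simp only [if_neg h1, if_pos h2, one_mul]
    exact integrable_id_gaussian
  · simp only [if_neg h1, if_neg h2, mul_one]
    exact integrable_const 1

lemma fac_prod {d : ℕ} (j k : Fin d) (v : Fin d → ℝ) :
    ∏ i, fac j k i (v i) = v j * v k := by
  unfold fac
  rw [Finset.prod_mul_distrib]
  congr 1
  · rw [Finset.prod_ite_eq' Finset.univ j (fun i => v i)]; simp
  · rw [Finset.prod_ite_eq' Finset.univ k (fun i => v i)]; simp

lemma fac_integral {d : ℕ} (j k i : Fin d) :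
    ∫ t, fac j k i t ∂(gaussianReal 0 1) =
      if i = j then (if i = k then 1 else 0) else (if i = k then 0 else 1) := by
  unfold fac
  by_cases h1 : i = j <;> by_cases h2 : i = k
  · simp only [if_pos h1, if_pos h2]
    simpa [pow_two] using integral_sq_gaussian
  · simp only [if_pos h1, if_neg h2, mul_one]
    exact integral_id_gaussian
  · simp only [if_neg h1, if_pos h2, one_mul]
    exact integral_id_gaussian
  · simp only [if_neg h1, if_neg h2, mul_one]
    simp

lemma integrable_coord_mul {d : ℕ} (j k : Fin d) :
    Integrable (fun v : Fin d → ℝ => v j * v k) (stdGaussian d) := by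
  have := pi_integrable_prod (gaussianReal 0 1) (fac j k) (fac_integrable j k)
  refine this.congr (Filter.Eventually.of_forall fun v => ?_)
  exact fac_prod j k v

lemma integral_coord_mul {d : ℕ} (j k : Fin d) :
    ∫ v : Fin d → ℝ, v j * v k ∂(stdGaussian d) = if j = k then 1 else 0 := by
  have h : ∫ v : Fin d → ℝ, v j * v k ∂(stdGaussian d)
      = ∫ v : Fin d → ℝ, ∏ i, fac j k i (v i) ∂(stdGaussian d) := by
    congr 1; funext v; rw [fac_prod]
  rw [h, _root_.stdGaussian, pi_integral_prod]
  simp only [fac_integral]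
  rcases eq_or_ne j k with h1 | h1
  · subst h1
    rw [if_pos rfl]
    apply Finset.prod_eq_one
    intro i _
    by_cases h2 : i = j <;> simp [if_pos, if_neg, h2]
  · rw [if_neg h1]
    apply Finset.prod_eq_zero (Finset.mem_univ j)
    rw [if_pos rfl, if_neg h1]

lemma sum_mul_sq_expand {d : ℕ} (a : Fin d → ℝ) (v : Fin d → ℝ) :
    (∑ j, a j * v j) ^ 2 = ∑ j, ∑ k, (a j * a k) * (v j * v k) := by
  rw [sq, Finset.sum_mul_sum]
  apply Finset.sum_congr rfl; intro j _
  apply Finset.sum_congr rfl; intro k _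
  ring

lemma integrable_linear_sq {d : ℕ} (a : Fin d → ℝ) :
    Integrable (fun v : Fin d → ℝ => (∑ j, a j * v j) ^ 2) (stdGaussian d) := by
  simp only [sum_mul_sq_expand]
  apply integrable_finset_sum; intro j _
  apply integrable_finset_sum; intro k _
  exact (integrable_coord_mul j k).const_mul _

lemma integral_linear_sq {d : ℕ} (a : Fin d → ℝ) :
    ∫ v : Fin d → ℝ, (∑ j, a j * v j) ^ 2 ∂(stdGaussian d) = ∑ j, a j ^ 2 := by
  simp only [sum_mul_sq_expand]
  rw [integral_finset_sum _ (fun j _ => integrable_finset_sum _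
    (fun k _ => (integrable_coord_mul j k).const_mul _))]
  have : ∀ j : Fin d, ∫ v : Fin d → ℝ, ∑ k, (a j * a k) * (v j * v k) ∂(stdGaussian d)
      = a j ^ 2 := by
    intro j
    rw [integral_finset_sum _ (fun k _ => (integrable_coord_mul j k).const_mul _)]
    have : ∀ k : Fin d, ∫ v : Fin d → ℝ, (a j * a k) * (v j * v k) ∂(stdGaussian d)
        = if j = k then a j * a k else 0 := by
      intro k
      rw [integral_const_mul, integral_coord_mul, mul_ite, mul_one, mul_zero]
    simp only [this]
    rw [Finset.sum_ite_eq Finset.univ j (fun k => a j * a k)]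
    simp [sq]
  simp only [this]


instance stdGaussian_isProb (d : ℕ) : IsProbabilityMeasure (stdGaussian d) := by
  unfold _root_.stdGaussian; infer_instance

lemma sq_euclNorm_mulVec {d r : ℕ} (A : Matrix (Fin r) (Fin d) ℝ) (v : Fin d → ℝ) :
    euclNorm (A *ᵥ v) ^ 2 = ∑ i, (∑ j, A i j * v j) ^ 2 := by
  rw [sq_euclNorm]
  apply Finset.sum_congr rfl; intro i _
  congr 1

lemma integrable_sq_euclNorm_mulVec {d r : ℕ} (A : Matrix (Fin r) (Fin d) ℝ) :
    Integrable (fun v : Fin d → ℝ => euclNorm (A *ᵥ v) ^ 2) (stdGaussian d) := by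
  simp only [sq_euclNorm_mulVec]
  exact integrable_finset_sum _ (fun i _ => integrable_linear_sq (fun j => A i j))

lemma integral_sq_euclNorm_mulVec {d r : ℕ} (A : Matrix (Fin r) (Fin d) ℝ) :
    ∫ v : Fin d → ℝ, euclNorm (A *ᵥ v) ^ 2 ∂(stdGaussian d) = ∑ i, ∑ j, A i j ^ 2 := by
  simp only [sq_euclNorm_mulVec]
  rw [integral_finset_sum _ (fun i _ => integrable_linear_sq (fun j => A i j))]
  exact Finset.sum_congr rfl fun i _ => integral_linear_sq (fun j => A i j)

lemma continuous_euclNorm_mulVec {d r : ℕ} (A : Matrix (Fin r) (Fin d) ℝ) :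
    Continuous (fun v : Fin d → ℝ => euclNorm (A *ᵥ v)) := by
  unfold euclNorm
  apply Real.continuous_sqrt.comp
  apply continuous_finset_sum
  intro i _
  have : Continuous (fun v : Fin d → ℝ => (A *ᵥ v) i) := by
    simp only [Matrix.mulVec, dotProduct]
    exact continuous_finset_sum _ (fun j _ => continuous_const.mul (continuous_apply j))
  exact (this.pow 2)

lemma integrable_euclNorm_mulVec {d r : ℕ} (A : Matrix (Fin r) (Fin d) ℝ) :
    Integrable (fun v : Fin d → ℝ => euclNorm (A *ᵥ v)) (stdGaussian d) := by
  have hbound : ∀ v : Fin d → ℝ, ‖euclNorm (A *ᵥ v)‖ ≤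
      ‖(1 : ℝ) + euclNorm (A *ᵥ v) ^ 2‖ := by
    intro v
    have h0 := euclNorm_nonneg (A *ᵥ v)
    rw [Real.norm_eq_abs, Real.norm_eq_abs, abs_of_nonneg h0,
      abs_of_nonneg (by nlinarith : (0:ℝ) ≤ 1 + euclNorm (A *ᵥ v) ^ 2)]
    nlinarith [sq_nonneg (euclNorm (A *ᵥ v) - 1)]
  exact Integrable.mono ((integrable_const 1).add (integrable_sq_euclNorm_mulVec A))
    (continuous_euclNorm_mulVec A).aestronglyMeasurable
    (Filter.Eventually.of_forall hbound)

lemma integral_le_sqrt_integral_sq {α : Type*} [MeasurableSpace α] (μ : Measure α)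
    [IsProbabilityMeasure μ] (g : α → ℝ) (hg0 : ∀ x, 0 ≤ g x)
    (hg1 : Integrable g μ) (hg2 : Integrable (fun x => g x ^ 2) μ) :
    ∫ x, g x ∂μ ≤ Real.sqrt (∫ x, g x ^ 2 ∂μ) := by
  set I := ∫ x, g x ∂μ with hI
  have hInn : 0 ≤ I := integral_nonneg hg0
  have hvar : 0 ≤ ∫ x, (g x - I) ^ 2 ∂μ :=
    integral_nonneg (fun x => sq_nonneg _)
  have hexp : ∫ x, (g x - I) ^ 2 ∂μ = (∫ x, g x ^ 2 ∂μ) - I ^ 2 := by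
    have h1 : ∀ x, (g x - I) ^ 2 = g x ^ 2 - (2 * I) * g x + I ^ 2 := by
      intro x; ring
    have h2 : Integrable (fun x => g x ^ 2 - (2 * I) * g x) μ := hg2.sub (hg1.const_mul _)
    have hA := integral_add h2 (integrable_const (I ^ 2) (μ := μ))
    calc ∫ x, (g x - I) ^ 2 ∂μ
        = ∫ x, (g x ^ 2 - (2 * I) * g x) + I ^ 2 ∂μ := by
          congr 1; funext x; ring
      _ = (∫ x, g x ^ 2 - (2 * I) * g x ∂μ) + ∫ _, I ^ 2 ∂μ := hA
      _ = ((∫ x, g x ^ 2 ∂μ) - 2 * I * I) + I ^ 2 := by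
          rw [integral_sub hg2 (hg1.const_mul _), integral_const_mul, integral_const]
          simp only [probReal_univ, ENNReal.toReal_one, one_smul, ← hI]
      _ = (∫ x, g x ^ 2 ∂μ) - I ^ 2 := by ring
  have hle : I ^ 2 ≤ ∫ x, g x ^ 2 ∂μ := by
    rw [hexp] at hvar; linarith
  calc I = Real.sqrt (I ^ 2) := (Real.sqrt_sq hInn).symm
    _ ≤ Real.sqrt (∫ x, g x ^ 2 ∂μ) := Real.sqrt_le_sqrt hle


/-- (Few-shot excess risk with a learned representation; population
version — the paper's Theorem 5.) There is an absolute constant `C` such that for any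
rotation-closed class `ℱ`, `L`-Lipschitz loss, ground truth `f* ∈ ℱ` minimizing
`𝓛(f*; ·)` at `W`, orthonormal `Û_r` with `Ŵ := (Û_r Q̂)ᵀ` for the optimal orthogonal
`Q̂`, and `f̂ ∈ ℱ` minimizing `𝓛(·; Û_rᵀ)`:
`𝓛(f̂; Û_rᵀ) − 𝓛(f*; W) ≤ C L √r ‖Ŵ − W‖`. -/
theorem stmt10 : ∃ C : ℝ, 0 < C ∧
    ∀ (Ω : Type) (_mΩ : MeasurableSpace Ω) (Pr : Measure Ω), IsProbabilityMeasure Pr →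
    ∀ (Y : Type) (d r : ℕ)
      (W : Matrix (Fin r) (Fin d) ℝ), W * Wᵀ = 1 →
    ∀ (x : Ω → (Fin d → ℝ)) (y : Ω → Y), Measurable x →
      Measure.map x Pr = stdGaussian d →
    ∀ (F : Set ((Fin r → ℝ) → ℝ)) (ℓ : ℝ → Y → ℝ) (L : ℝ), 0 ≤ L →
    -- rotation closure of the class `ℱ` (Assumption 1)
    (∀ f ∈ F, ∀ Q : Matrix (Fin r) (Fin r) ℝ, Q * Qᵀ = 1 →
      ∀ P : Matrix (Fin r) (Fin d) ℝ, ∃ g ∈ F, ∀ v : Fin d → ℝ,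
        f (P *ᵥ v) = g ((Q * P) *ᵥ v)) →
    -- the loss is `L`-Lipschitz in the representation argument
    (∀ f ∈ F, ∀ (yv : Y) (p q : Fin r → ℝ),
      |ℓ (f p) yv - ℓ (f q) yv| ≤ L * euclNorm (p - q)) →
    -- population risk
    ∀ (risk : ((Fin r → ℝ) → ℝ) → Matrix (Fin r) (Fin d) ℝ → ℝ),
      (∀ f P, risk f P = ∫ ω, ℓ (f (P *ᵥ x ω)) (y ω) ∂Pr) →
    -- the population risk is well defined on the class
    (∀ f ∈ F, ∀ P : Matrix (Fin r) (Fin d) ℝ,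
      Integrable (fun ω => ℓ (f (P *ᵥ x ω)) (y ω)) Pr) →
    -- ground-truth model: `min_P 𝓛(f*; P) = 𝓛(f*; W)`
    ∀ fstar ∈ F, (∀ P : Matrix (Fin r) (Fin d) ℝ, risk fstar W ≤ risk fstar P) →
    -- learned representation and optimal rotation
    ∀ (U : Matrix (Fin d) (Fin r) ℝ), Uᵀ * U = 1 →
    ∀ (Q : Matrix (Fin r) (Fin r) ℝ), Q * Qᵀ = 1 →
    (∀ Q' : Matrix (Fin r) (Fin r) ℝ, Q' * Q'ᵀ = 1 →
      opNorm (U * Q - Wᵀ) ≤ opNorm (U * Q' - Wᵀ)) →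
    ∀ (What : Matrix (Fin r) (Fin d) ℝ), What = (U * Q)ᵀ →
    -- `f̂` minimizes the population risk over `ℱ` with representation `Û_rᵀ`
    ∀ fhat ∈ F, (∀ f ∈ F, risk fhat Uᵀ ≤ risk f Uᵀ) →
    risk fhat Uᵀ - risk fstar W ≤ C * L * Real.sqrt (r : ℝ) * opNorm (What - W) := by
  refine ⟨1, one_pos, ?_⟩
  intro Ω _mΩ Pr _hPr Y d r W _hW x y hx hmap F ℓ L hL hclosure hlip risk hrisk hint
    fstar hfstarF _hmin U _hU Q hQ _hQopt What hWhat fhat _hfhatF hfhatmin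
  obtain ⟨g, hgF, hg⟩ := hclosure fstar hfstarF Q hQ What
  have hQWhat : Q * What = Uᵀ := by
    rw [hWhat, Matrix.transpose_mul, ← Matrix.mul_assoc, hQ, Matrix.one_mul]
  have hg' : ∀ v, fstar (What *ᵥ v) = g (Uᵀ *ᵥ v) := by
    intro v
    rw [← hQWhat]; exact hg v
  have step1 : risk fhat Uᵀ ≤ risk fstar What := by
    calc risk fhat Uᵀ ≤ risk g Uᵀ := hfhatmin g hgF
      _ = risk fstar What := by
          rw [hrisk, hrisk]; congr 1; funext ω; rw [hg' (x ω)]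
  set A : Matrix (Fin r) (Fin d) ℝ := What - W with hA
  have hcont : Continuous (fun v : Fin d → ℝ => euclNorm (A *ᵥ v)) :=
    continuous_euclNorm_mulVec A
  have hpt : ∀ ω, ℓ (fstar (What *ᵥ x ω)) (y ω) - ℓ (fstar (W *ᵥ x ω)) (y ω)
      ≤ L * euclNorm (A *ᵥ x ω) := by
    intro ω
    have h := hlip fstar hfstarF (y ω) (What *ᵥ x ω) (W *ᵥ x ω)
    have heq : What *ᵥ x ω - W *ᵥ x ω = A *ᵥ x ω := (Matrix.sub_mulVec _ _ _).symm
    calc ℓ (fstar (What *ᵥ x ω)) (y ω) - ℓ (fstar (W *ᵥ x ω)) (y ω)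
        ≤ |ℓ (fstar (What *ᵥ x ω)) (y ω) - ℓ (fstar (W *ᵥ x ω)) (y ω)| := le_abs_self _
      _ ≤ L * euclNorm (What *ᵥ x ω - W *ᵥ x ω) := h
      _ = L * euclNorm (A *ᵥ x ω) := by rw [heq]
  have hintb : Integrable (fun ω => L * euclNorm (A *ᵥ x ω)) Pr := by
    have h1 : Integrable (fun v : Fin d → ℝ => L * euclNorm (A *ᵥ v)) (Measure.map x Pr) := by
      rw [hmap]; exact (integrable_euclNorm_mulVec A).const_mul L
    exact (integrable_map_measure
      (by rw [hmap]; exact (continuous_const.mul hcont).aestronglyMeasurable)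
      hx.aemeasurable).mp h1
  have step2 : risk fstar What - risk fstar W ≤ ∫ ω, L * euclNorm (A *ᵥ x ω) ∂Pr := by
    rw [hrisk, hrisk, ← integral_sub (hint fstar hfstarF What) (hint fstar hfstarF W)]
    exact integral_mono ((hint fstar hfstarF What).sub (hint fstar hfstarF W)) hintb hpt
  have step3 : ∫ ω, L * euclNorm (A *ᵥ x ω) ∂Pr
      = L * ∫ v, euclNorm (A *ᵥ v) ∂(stdGaussian d) := by
    rw [← integral_const_mul, ← hmap,
      integral_map hx.aemeasurable
        (by rw [hmap]; exact (continuous_const.mul hcont).aestronglyMeasurable)]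
  have hCS : ∫ v, euclNorm (A *ᵥ v) ∂(stdGaussian d)
      ≤ Real.sqrt (∑ i, ∑ j, A i j ^ 2) := by
    have h := integral_le_sqrt_integral_sq (stdGaussian d) (fun v => euclNorm (A *ᵥ v))
      (fun v => euclNorm_nonneg _) (integrable_euclNorm_mulVec A)
      (integrable_sq_euclNorm_mulVec A)
    rwa [integral_sq_euclNorm_mulVec A] at h
  have hsum : ∑ i, ∑ j, A i j ^ 2 ≤ (r : ℝ) * opNorm A ^ 2 := by
    calc ∑ i, ∑ j, A i j ^ 2 ≤ ∑ _i : Fin r, opNorm A ^ 2 := by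
          apply Finset.sum_le_sum; intro i _
          have h2 : ∑ j, A i j ^ 2 = euclNorm (fun j => A i j) ^ 2 := (sq_euclNorm _).symm
          rw [h2]
          exact pow_le_pow_left₀ (euclNorm_nonneg _) (row_euclNorm_le A i) 2
      _ = (r : ℝ) * opNorm A ^ 2 := by
          rw [Finset.sum_const, Finset.card_univ, Fintype.card_fin, nsmul_eq_mul]
  have hfinal : Real.sqrt (∑ i, ∑ j, A i j ^ 2) ≤ Real.sqrt (r : ℝ) * opNorm A :=
    calc Real.sqrt (∑ i, ∑ j, A i j ^ 2)
        ≤ Real.sqrt ((r : ℝ) * opNorm A ^ 2) := Real.sqrt_le_sqrt hsum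
      _ = Real.sqrt (r : ℝ) * opNorm A := by
          rw [Real.sqrt_mul (Nat.cast_nonneg r), Real.sqrt_sq (opNorm_nonneg A)]
  have hcomb : risk fhat Uᵀ - risk fstar W ≤ L * (Real.sqrt (r : ℝ) * opNorm A) :=
    calc risk fhat Uᵀ - risk fstar W
        ≤ risk fstar What - risk fstar W := by linarith [step1]
      _ ≤ ∫ ω, L * euclNorm (A *ᵥ x ω) ∂Pr := step2
      _ = L * ∫ v, euclNorm (A *ᵥ v) ∂(stdGaussian d) := step3
      _ ≤ L * (Real.sqrt (r : ℝ) * opNorm A) :=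
          mul_le_mul_of_nonneg_left (hCS.trans hfinal) hL
  calc risk fhat Uᵀ - risk fstar W ≤ L * (Real.sqrt (r : ℝ) * opNorm A) := hcomb
    _ = 1 * L * Real.sqrt (r : ℝ) * opNorm (What - W) := by rw [← hA]; ring
end
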